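/- arXiv:1011.6035 — 3 statements merged into one kernel-verified Lean document; each statement's English description precedes it below -/
import Mathlib

section
/- Let X be a finite connected Alexander quandle and let e be the minimal positive integer with (T^e − 1)X = 0. Then the map sending (ε, x) ∈ Z/eZ ⋉ X to the permutation y ↦ T^ε y + (1−T)x of X is a group isomorphism from the semidirect product Z/eZ ⋉ X onto Inn(X), where ε ∈ Z/eZ acts on the additive group X by x ↦ T^ε x. -/
open scoped Topology TensorProduct

/-- A quandle: a set with a binary operation `op` (written `x * y` in the paper) such that
every element is idempotent, the operation is right self-distributive, and every right
translation is a bijection. -/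
structure QuandleStruct (X : Type*) where
  op : X → X → X
  idem : ∀ x, op x x = x
  distrib : ∀ x y z, op (op x y) z = op (op x z) (op y z)
  rightBij : ∀ y, Function.Bijective fun x => op x y

namespace QuandleStruct

variable {X : Type*} (Q : QuandleStruct X)

/-- The right translation by `y`, as a permutation of `X`. -/
noncomputable def rightTransl (y : X) : Equiv.Perm X :=
  Equiv.ofBijective _ (Q.rightBij y)

@[simp] lemma rightTransl_apply (y x : X) : Q.rightTransl y x = Q.op x y := rfl

/-- The inner automorphism group of a quandle: the subgroup of the permutation
group generated by all right translations. -/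
noncomputable def Inn : Subgroup (Equiv.Perm X) :=
  Subgroup.closure (Set.range Q.rightTransl)

/-- A tuple is degenerate when two consecutive entries are equal. -/
def IsDeg {n : ℕ} (f : Fin n → X) : Prop :=
  ∃ i : Fin n, ∃ h : (i : ℕ) + 1 < n, f i = f ⟨(i : ℕ) + 1, h⟩

/-- `n`-chains of the rack complex with trivial coefficients: the free abelian
group on `X^n`. -/
abbrev CR (n : ℕ) : Type _ := FreeAbelianGroup (Fin n → X)

/-- The boundary `∂_{n+1} : C_{n+1}^R → C_n^R` of the rack complex,
`∂(x₁,…,x_{n+1}) = Σᵢ (-1)ⁱ ((x₁*xᵢ,…,x_{i-1}*xᵢ,x_{i+1},…) - (x₁,…,x_{i-1},x_{i+1},…))`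
(1-indexed signs). -/
noncomputable def dR (n : ℕ) : (CR (X := X) (n + 1)) →+ CR (X := X) n :=
  FreeAbelianGroup.lift fun f =>
    ∑ i : Fin (n + 1),
      ((-1 : ℤ) ^ ((i : ℕ) + 1)) •
        (FreeAbelianGroup.of (i.removeNth fun j => if (j : ℕ) < (i : ℕ) then Q.op (f j) (f i) else f j)
          - FreeAbelianGroup.of (i.removeNth f))

open Classical in
/-- The projection killing the degenerate basis elements. -/
noncomputable def projQ (n : ℕ) : (CR (X := X) n) →+ FreeAbelianGroup {f : Fin n → X // ¬ IsDeg f} :=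
  FreeAbelianGroup.lift fun f => if h : IsDeg f then 0 else FreeAbelianGroup.of ⟨f, h⟩

/-- `n`-chains of the quandle complex: the quotient of the rack complex by the degenerate
subcomplex, realized as the free abelian group on nondegenerate tuples. -/
abbrev CQ (n : ℕ) : Type _ := FreeAbelianGroup {f : Fin n → X // ¬ IsDeg f}

noncomputable def inclQ (n : ℕ) : (CQ (X := X) n) →+ CR (X := X) n :=
  FreeAbelianGroup.lift fun f => FreeAbelianGroup.of f.1

/-- The boundary of the quandle complex (the map induced by `dR` on the quotient
by the degenerate subcomplex). -/
noncomputable def dQ (n : ℕ) : (CQ (X := X) (n + 1)) →+ CQ (X := X) n :=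
  (projQ n).comp ((Q.dR n).comp (inclQ (n + 1)))

/-- The boundary `∂_n : C_n^Q → C_{n-1}^Q` (with `∂₀ = 0`). -/
noncomputable def DQ : ∀ n : ℕ, (CQ (X := X) n) →+ CQ (X := X) (n - 1)
  | 0 => 0
  | (n + 1) => Q.dQ n

/-- The `n`-th quandle homology group `H_n^Q(X;ℤ)`: cycles modulo boundaries in the
quandle complex. -/
noncomputable def HQ (n : ℕ) : Type _ :=
  (Q.DQ n).ker ⧸ ((Q.dQ n).range.addSubgroupOf (Q.DQ n).ker)

noncomputable instance (n : ℕ) : AddCommGroup (Q.HQ n) :=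
  QuotientAddGroup.Quotient.addCommGroup _

/-- The `n`-th rack homology group `H_n^R(X;ℤ)`. -/
noncomputable def DR : ∀ n : ℕ, (CR (X := X) n) →+ CR (X := X) (n - 1)
  | 0 => 0
  | (n + 1) => Q.dR n

noncomputable def HR (n : ℕ) : Type _ :=
  (Q.DR n).ker ⧸ ((Q.dR n).range.addSubgroupOf (Q.DR n).ker)

noncomputable instance (n : ℕ) : AddCommGroup (Q.HR n) :=
  QuotientAddGroup.Quotient.addCommGroup _

end QuandleStruct

namespace QuandleStruct

variable {X : Type*} (Q : QuandleStruct X)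

/-- The right translation by `y` as an element of the inner automorphism group. -/
noncomputable def innTransl (y : X) : Q.Inn :=
  ⟨Q.rightTransl y, Subgroup.subset_closure ⟨y, rfl⟩⟩

/-- `n`-chains of the rack complex with coefficients in `ℤ[Inn(X)]`: the free abelian group
on `Inn(X) × X^n`. -/
abbrev CRG (n : ℕ) : Type _ := FreeAbelianGroup (Q.Inn × (Fin n → X))

/-- The boundary of the rack complex with coefficients in `ℤ[Inn(X)]`:
`∂(g;x₁,…,x_{n+1}) = Σᵢ (-1)ⁱ ((g·x̄ᵢ; x₁*xᵢ,…,x_{i-1}*xᵢ,x_{i+1},…) - (g; x₁,…,x_{i-1},x_{i+1},…))`. -/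
noncomputable def dRG (n : ℕ) : (Q.CRG (n + 1)) →+ Q.CRG n :=
  FreeAbelianGroup.lift fun gf =>
    ∑ i : Fin (n + 1),
      ((-1 : ℤ) ^ ((i : ℕ) + 1)) •
        (FreeAbelianGroup.of (gf.1 * Q.innTransl (gf.2 i),
            i.removeNth fun j => if (j : ℕ) < (i : ℕ) then Q.op (gf.2 j) (gf.2 i) else gf.2 j)
          - FreeAbelianGroup.of (gf.1, i.removeNth gf.2))

noncomputable def DRG : ∀ n : ℕ, (Q.CRG n) →+ Q.CRG (n - 1)
  | 0 => 0
  | (n + 1) => Q.dRG n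

/-- The `n`-th rack homology group `H_n^R(X;ℤ[Inn X])`. -/
noncomputable def HRG (n : ℕ) : Type _ :=
  (Q.DRG n).ker ⧸ ((Q.dRG n).range.addSubgroupOf (Q.DRG n).ker)

noncomputable instance (n : ℕ) : AddCommGroup (Q.HRG n) :=
  QuotientAddGroup.Quotient.addCommGroup _

/-- `n`-chains of the quandle complex with coefficients in `ℤ[Inn(X)]`. -/
abbrev CQG (n : ℕ) : Type _ := FreeAbelianGroup (Q.Inn × {f : Fin n → X // ¬ IsDeg f})

open Classical in
noncomputable def projQG (n : ℕ) : (Q.CRG n) →+ Q.CQG n :=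
  FreeAbelianGroup.lift fun gf =>
    if h : IsDeg gf.2 then 0 else FreeAbelianGroup.of (gf.1, ⟨gf.2, h⟩)

noncomputable def inclQG (n : ℕ) : (Q.CQG n) →+ Q.CRG n :=
  FreeAbelianGroup.lift fun gf => FreeAbelianGroup.of (gf.1, gf.2.1)

noncomputable def dQG (n : ℕ) : (Q.CQG (n + 1)) →+ Q.CQG n :=
  (Q.projQG n).comp ((Q.dRG n).comp (Q.inclQG (n + 1)))

noncomputable def DQG : ∀ n : ℕ, (Q.CQG n) →+ Q.CQG (n - 1)
  | 0 => 0
  | (n + 1) => Q.dQG n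

/-- The `n`-th quandle homology group `H_n^Q(X;ℤ[Inn X])`. -/
noncomputable def HQG (n : ℕ) : Type _ :=
  (Q.DQG n).ker ⧸ ((Q.dQG n).range.addSubgroupOf (Q.DQG n).ker)

noncomputable instance (n : ℕ) : AddCommGroup (Q.HQG n) :=
  QuotientAddGroup.Quotient.addCommGroup _

/-- A tuple is "late-degenerate" when `x_i = x_{i+1}` for some `i ≥ 2` (1-indexed),
i.e. for some `i ≥ 1` in 0-indexed notation. -/
def IsLate {n : ℕ} (f : Fin n → X) : Prop :=
  ∃ i : Fin n, 1 ≤ (i : ℕ) ∧ ∃ h : (i : ℕ) + 1 < n, f i = f ⟨(i : ℕ) + 1, h⟩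

/-- `n`-chains of the subcomplex `C_*^L`, spanned by late-degenerate tuples. -/
abbrev CL (n : ℕ) : Type _ := FreeAbelianGroup {f : Fin n → X // IsLate f}

open Classical in
noncomputable def projL (n : ℕ) : (CR (X := X) n) →+ CL (X := X) n :=
  FreeAbelianGroup.lift fun f => if h : IsLate f then FreeAbelianGroup.of ⟨f, h⟩ else 0

noncomputable def inclL (n : ℕ) : (CL (X := X) n) →+ CR (X := X) n :=
  FreeAbelianGroup.lift fun f => FreeAbelianGroup.of f.1

/-- The boundary of the subcomplex `C_*^L` (the restriction of the rack boundary). -/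
noncomputable def dL (n : ℕ) : (CL (X := X) (n + 1)) →+ CL (X := X) n :=
  (projL n).comp ((Q.dR n).comp (inclL (n + 1)))

noncomputable def DL : ∀ n : ℕ, (CL (X := X) n) →+ CL (X := X) (n - 1)
  | 0 => 0
  | (n + 1) => Q.dL n

/-- The `n`-th homology group `H_n^L(X;ℤ)` of the subcomplex `C_*^L`. -/
noncomputable def HL (n : ℕ) : Type _ :=
  (Q.DL n).ker ⧸ ((Q.dL n).range.addSubgroupOf (Q.DL n).ker)

noncomputable instance (n : ℕ) : AddCommGroup (Q.HL n) :=
  QuotientAddGroup.Quotient.addCommGroup _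

end QuandleStruct

/-- The group structure on `AddAut A` by composition, as in the older library (where `AddAut A`
was a multiplicative group). -/
instance AddAut.groupOld (A : Type*) [Add A] : Group (AddAut A) where
  mul g h := AddEquiv.trans h g
  one := AddEquiv.refl _
  inv := AddEquiv.symm
  mul_assoc _ _ _ := rfl
  one_mul _ := rfl
  mul_one _ := rfl
  inv_mul_cancel := AddEquiv.self_trans_symm

section Alexander

variable {X : Type*} [AddCommGroup X]

/-- The Alexander quandle associated to an automorphism `T` of an abelian group `X`
(i.e. to a `ℤ[T,T⁻¹]`-module structure on `X`): `x * y = T x + (1 - T) y`. -/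
def alexanderOp (T : AddAut X) : QuandleStruct X where
  op x y := T x + (y - T y)
  idem x := by simp
  distrib x y z := by
    simp only [map_add, map_sub]
    abel
  rightBij y := by
    refine Function.bijective_iff_has_inverse.2 ⟨fun z => T.symm (z - (y - T y)), ?_, ?_⟩
    · intro x; simp
    · intro x; simp

/-- A finite Alexander quandle is connected iff `(1-T)X = X`, i.e. `x ↦ x - T x` is
surjective. -/
def AlexConnected (T : AddAut X) : Prop :=
  Function.Surjective fun x => x - T x

/-- A finite Alexander quandle is regular when it is connected and the minimal `e ≥ 1`
with `(Tᵉ - 1)X = 0` (i.e. the order of `T`) is coprime to `|X|`. -/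
def AlexRegular (T : AddAut X) : Prop :=
  AlexConnected T ∧ Nat.Coprime (orderOf T) (Nat.card X)

end Alexander

/-- The Alexander quandle on a field `F` given by `x * y = ω x + (1 - ω) y`, for `ω ≠ 0`. -/
def alexanderField {F : Type*} [Field F] (ω : F) (hω : ω ≠ 0) : QuandleStruct F where
  op x y := ω * x + (1 - ω) * y
  idem x := by ring
  distrib x y z := by ring
  rightBij y := by
    refine Function.bijective_iff_has_inverse.2 ⟨fun z => ω⁻¹ * (z - (1 - ω) * y), ?_, ?_⟩
    · intro x
      field_simp
      ring
    · intro x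
      field_simp
      ring

/-- The dihedral quandle on `ℤ/mℤ`: `x * y = 2y - x`. -/
def dihedral (m : ℕ) : QuandleStruct (ZMod m) where
  op x y := 2 * y - x
  idem x := by ring
  distrib x y z := by ring
  rightBij y := by
    have : Function.Involutive fun x : ZMod m => 2 * y - x := fun x => by ring
    exact this.bijective
namespace QuandleStruct

variable {X : Type*} (Q : QuandleStruct X)

/-- The relations of the associated group `As(X)`: `x · y = y · (x*y)`. -/
def asRels : Set (FreeGroup X) :=
  {w | ∃ x y : X,
    w = FreeGroup.of x * FreeGroup.of y * (FreeGroup.of y * FreeGroup.of (Q.op x y))⁻¹}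

/-- The associated group `As(X)` of a quandle: generated by the elements of `X` subject to
the relations `x · y = y · (x*y)`. -/
def asGroup : Type _ := PresentedGroup Q.asRels

noncomputable instance : Group Q.asGroup :=
  inferInstanceAs (Group (PresentedGroup Q.asRels))

/-- The natural homomorphism `As(X) → Inn(X)` sending the generator corresponding to `x` to
the right translation by `x` (valued in the opposite group, which accounts for the
composition convention on permutations). -/
noncomputable def asToInn : Q.asGroup →* (Q.Inn)ᵐᵒᵖ :=
  PresentedGroup.toGroup (f := fun x => MulOpposite.op (Q.innTransl x)) (by
    rintro r ⟨x, y, rfl⟩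
    rw [map_mul, map_mul, map_inv, map_mul]
    simp only [FreeGroup.lift_apply_of]
    rw [mul_inv_eq_one]
    rw [← MulOpposite.op_mul, ← MulOpposite.op_mul]
    congr 1
    ext z
    show (((Q.innTransl y : Q.Inn) : Equiv.Perm X) * ((Q.innTransl x : Q.Inn) : Equiv.Perm X)) z
      = (((Q.innTransl (Q.op x y) : Q.Inn) : Equiv.Perm X) * ((Q.innTransl y : Q.Inn) : Equiv.Perm X)) z
    simp only [Equiv.Perm.mul_apply, innTransl, rightTransl_apply]
    exact Q.distrib z x y)

end QuandleStruct

section TAct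

variable {X : Type*} [AddCommGroup X]

lemma pow_mod_of_pow_eq_one {G : Type*} [Group G] {T : G} {e : ℕ} (he : T ^ e = 1) (n : ℕ) :
    T ^ (n % e) = T ^ n := by
  conv_rhs => rw [← Nat.div_add_mod n e]
  rw [pow_add, pow_mul, he, one_pow, one_mul]

/-- The action of `ℤ/eℤ` on `X` by powers of `T`, as a homomorphism into the automorphisms
of `Multiplicative X`. -/
noncomputable def tAct (T : AddAut X) (e : ℕ) [NeZero e] (he : T ^ e = 1) :
    Multiplicative (ZMod e) →* MulAut (Multiplicative X) where
  toFun ε := AddEquiv.toMultiplicative (T ^ (Multiplicative.toAdd ε).val : AddAut X)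
  map_one' := by
    show AddEquiv.toMultiplicative
        (T ^ (Multiplicative.toAdd (1 : Multiplicative (ZMod e))).val : AddAut X) = 1
    have h0 : (Multiplicative.toAdd (1 : Multiplicative (ZMod e))).val = 0 := by
      simp [ZMod.val_zero]
    rw [h0, pow_zero]
    rfl
  map_mul' a b := by
    show AddEquiv.toMultiplicative (T ^ (Multiplicative.toAdd (a * b)).val : AddAut X)
      = AddEquiv.toMultiplicative (T ^ (Multiplicative.toAdd a).val : AddAut X)
        * AddEquiv.toMultiplicative (T ^ (Multiplicative.toAdd b).val : AddAut X)
    have hab : (Multiplicative.toAdd (a * b)).val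
        = ((Multiplicative.toAdd a).val + (Multiplicative.toAdd b).val) % e := by
      simp [ZMod.val_add]
    rw [hab, pow_mod_of_pow_eq_one he, pow_add]
    rfl

end TAct

/-!
The right translations `R_x : y ↦ T y + (1 - T) x` are affine maps with linear part `T`, so
`(x, ε) ↦ (y ↦ T^ε y + (1 - T) x)` is a homomorphism from `ℤ/eℤ ⋉ X` to the permutations of `X`.
It sends `(x, 1)` to `R_x`, and its values lie in `Inn(X)` because `R_x R_0⁻¹` is translation
by `(1 - T) x` and `R_0 = T`. Its kernel is trivial: `1 - T` is injective since it is surjective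
on the finite set `X`, and `T^ε = 1` forces `ε = 0` since `e` is the order of `T`.
-/

lemma ZMod.eq_zero_of_pow_val_eq_one {G : Type*} [Monoid G] {g : G} {e : ℕ} [NeZero e]
    (hmin : ∀ k : ℕ, 0 < k → g ^ k = 1 → e ≤ k) {ε : ZMod e} (h : g ^ ε.val = 1) : ε = 0 := by
  by_contra hε
  exact (ZMod.val_lt ε).not_ge (hmin _ (ZMod.val_pos.2 hε) h)

namespace AlexanderInn

variable {X : Type*} [AddCommGroup X] (T : AddAut X)

/-- Mathlib's `AddAut.toPerm` is additive; this is its counterpart for `AddAut.groupOld`. -/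
def addAutToPerm : AddAut X →* Equiv.Perm X where
  toFun := AddEquiv.toEquiv
  map_one' := rfl
  map_mul' _ _ := rfl

lemma addAutToPerm_injective : Function.Injective (addAutToPerm (X := X)) :=
  fun _ _ h => AddEquiv.ext fun y => Equiv.ext_iff.1 h y

lemma rightTransl_eq (x : X) :
    (alexanderOp T).rightTransl x = Equiv.addRight (x - T x) * addAutToPerm T :=
  Equiv.ext fun _ => rfl

lemma rightTransl_zero : (alexanderOp T).rightTransl 0 = addAutToPerm T := by
  ext y
  change T y + (0 - T 0) = T y
  rw [map_zero, sub_zero, add_zero]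

lemma pow_apply_sub_apply (k : ℕ) (x : X) : (T ^ k) x - T ((T ^ k) x) = (T ^ k) (x - T x) := by
  have hcomm : T ((T ^ k) x) = (T ^ k) (T x) :=
    congrArg (fun S : AddAut X => S x) (Commute.self_pow T k).eq
  rw [map_sub, hcomm]

lemma affine_comp_apply {e : ℕ} [NeZero e] (he : T ^ e = 1) (x₁ x₂ : X) (a b : ZMod e) (y : X) :
    (T ^ (a + b).val) y + (x₁ + (T ^ a.val) x₂ - T (x₁ + (T ^ a.val) x₂))
      = (T ^ a.val) ((T ^ b.val) y + (x₂ - T x₂)) + (x₁ - T x₁) := by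
  rw [ZMod.val_add, pow_mod_of_pow_eq_one he, pow_add, map_add T, map_add, ← pow_apply_sub_apply]
  change (T ^ a.val) ((T ^ b.val) y) + _ = _
  abel

variable (e : ℕ) [NeZero e] (he : T ^ e = 1)

noncomputable def innHom :
    (Multiplicative X ⋊[tAct T e he] Multiplicative (ZMod e)) →* Equiv.Perm X where
  toFun p := Equiv.addRight (p.left.toAdd - T p.left.toAdd) * addAutToPerm (T ^ p.right.toAdd.val)
  map_one' := by
    ext y
    simp
  map_mul' p q := Equiv.ext fun y => affine_comp_apply T he p.left.toAdd q.left.toAdd p.right.toAdd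
    q.right.toAdd y

lemma innHom_apply (p : Multiplicative X ⋊[tAct T e he] Multiplicative (ZMod e))
    (y : X) :
    innHom T e he p y = (T ^ p.right.toAdd.val) y + (p.left.toAdd - T p.left.toAdd) :=
  rfl

lemma innHom_mk_apply (x : X) (ε : ZMod e) (y : X) :
    innHom T e he ⟨Multiplicative.ofAdd x, Multiplicative.ofAdd ε⟩ y = (T ^ ε.val) y + (x - T x) :=
  rfl

lemma innHom_eq_rightTransl_mul
    (p : Multiplicative X ⋊[tAct T e he] Multiplicative (ZMod e)) :
    innHom T e he p = (alexanderOp T).rightTransl p.left.toAdd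
      * ((alexanderOp T).rightTransl 0)⁻¹
      * ((alexanderOp T).rightTransl 0) ^ p.right.toAdd.val := by
  rw [rightTransl_eq, rightTransl_zero, mul_inv_cancel_right, ← map_pow]
  rfl

lemma innHom_ofAdd_one (x : X) :
    innHom T e he ⟨Multiplicative.ofAdd x, Multiplicative.ofAdd 1⟩
      = (alexanderOp T).rightTransl x := by
  have hT : T ^ (1 : ZMod e).val = T := by
    rw [ZMod.val_one_eq_one_mod, pow_mod_of_pow_eq_one he, pow_one]
  ext y
  rw [innHom_mk_apply, hT]
  rfl

lemma innHom_range : (innHom T e he).range = (alexanderOp T).Inn := by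
  have hmem (x : X) : (alexanderOp T).rightTransl x ∈ (alexanderOp T).Inn :=
    Subgroup.subset_closure ⟨x, rfl⟩
  apply le_antisymm
  · rintro _ ⟨p, rfl⟩
    rw [innHom_eq_rightTransl_mul]
    exact mul_mem (mul_mem (hmem _) (inv_mem (hmem 0))) (pow_mem (hmem 0) _)
  · refine (Subgroup.closure_le _).2 ?_
    rintro _ ⟨x, rfl⟩
    exact ⟨_, innHom_ofAdd_one T e he x⟩

lemma innHom_injective (hinj : Function.Injective fun x : X => x - T x)
    (hmin : ∀ k : ℕ, 0 < k → T ^ k = 1 → e ≤ k) : Function.Injective (innHom T e he) := by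
  refine (injective_iff_map_eq_one _).2 fun ⟨x, ε⟩ hp => ?_
  have hx : x.toAdd - T x.toAdd = 0 := by
    simpa [innHom_apply] using Equiv.ext_iff.1 hp 0
  have hx0 : x.toAdd = 0 := hinj (by simpa using hx)
  have hpow : T ^ ε.toAdd.val = 1 :=
    AddEquiv.ext fun y => by
      have hy := Equiv.ext_iff.1 hp y
      rw [innHom_apply, hx, add_zero] at hy
      exact hy
  exact SemidirectProduct.ext hx0 (ZMod.eq_zero_of_pow_val_eq_one hmin hpow)

end AlexanderInn

open AlexanderInn in
/-- Let `X` be a finite connected Alexander quandle and `e` the minimal positive integer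
with `(Tᵉ - 1)X = 0`. Then `(ε, x) ↦ (y ↦ Tᵉ y + (1-T)x)` is a group isomorphism from the
semidirect product `ℤ/eℤ ⋉ X` (with `ε` acting by `Tᵉ`) onto `Inn(X)`. -/
theorem inn_iso_semidirect {X : Type} [AddCommGroup X] [Finite X] (T : AddAut X)
    (hconn : AlexConnected T) (e : ℕ) [NeZero e] (he : T ^ e = 1)
    (hmin : ∀ k : ℕ, 0 < k → T ^ k = 1 → e ≤ k) :
    ∃ ψ : (Multiplicative X ⋊[tAct T e he] Multiplicative (ZMod e))
        ≃* ↥(alexanderOp T).Inn,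
      ∀ (x : X) (ε : ZMod e) (y : X),
        ((ψ ⟨Multiplicative.ofAdd x, Multiplicative.ofAdd ε⟩ : ↥(alexanderOp T).Inn)
            : Equiv.Perm X) y
          = (T ^ ε.val) y + (x - T x) := by
  have hinj : Function.Injective (innHom T e he) :=
    innHom_injective T e he (Finite.injective_iff_surjective.2 hconn) hmin
  exact ⟨(MonoidHom.ofInjective hinj).trans (MulEquiv.subgroupCongr (innHom_range T e he)),
    fun x ε y => innHom_mk_apply T e he x ε y⟩
end

section
/- Let p be an odd prime and let m, n be positive integers. Then the integers (p^{2m} + 1)/2 and (p^{2n−1} + 1)/2 are relatively prime. -/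
/-!
If `d` divides both `a ^ i + 1` and `a ^ j + 1` with `i` even and `j` odd, then modulo `d`
the power `a ^ (i * j)` is both `(-1) ^ j = -1` and `(-1) ^ i = 1`, so `d ∣ 2`. Hence the gcd
of the halves divides `2`; it is odd because `p ^ (2m) ≡ 1 (mod 4)` makes `(p ^ (2m) + 1) / 2` odd.
-/

theorem neg_one_eq_one_of_pow_eq_neg_one {R : Type*} [CommRing R] {x : R} {i j : ℕ}
    (hi : Even i) (hj : Odd j) (hxi : x ^ i = -1) (hxj : x ^ j = -1) : (-1 : R) = 1 :=
  calc (-1 : R) = (x ^ i) ^ j := by rw [hxi, hj.neg_one_pow]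
    _ = (x ^ j) ^ i := by rw [← pow_mul, ← pow_mul, mul_comm]
    _ = 1 := by rw [hxj, hi.neg_one_pow]

theorem Nat.dvd_two_of_dvd_pow_add_one {a d i j : ℕ} (hi : Even i) (hj : Odd j)
    (hdi : d ∣ a ^ i + 1) (hdj : d ∣ a ^ j + 1) : d ∣ 2 := by
  have pow_eq_neg_one {k : ℕ} (hk : d ∣ a ^ k + 1) : (a : ZMod d) ^ k = -1 := by
    have := (ZMod.natCast_eq_zero_iff _ d).mpr hk
    push_cast at this
    exact eq_neg_of_add_eq_zero_left this
  have h := neg_one_eq_one_of_pow_eq_neg_one hi hj (pow_eq_neg_one hdi) (pow_eq_neg_one hdj)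
  refine (ZMod.natCast_eq_zero_iff 2 d).mp ?_
  push_cast
  linear_combination -h

theorem Nat.two_mul_half_add_one {x : ℕ} (hx : Odd x) : 2 * ((x + 1) / 2) = x + 1 :=
  Nat.two_mul_div_two_of_even hx.add_one

theorem Nat.odd_half_sq_add_one {b : ℕ} (hb : Odd b) : Odd ((b ^ 2 + 1) / 2) := by
  obtain ⟨k, rfl⟩ := hb
  have h : (2 * k + 1) ^ 2 + 1 = 2 * (2 * (k * k + k) + 1) := by ring
  rw [h, Nat.mul_div_cancel_left _ two_pos]
  exact odd_two_mul_add_one _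

theorem coprime_half_prime_powers_general (p m n : ℕ) (hodd : Odd p)
    (hn : 0 < n) :
    Nat.Coprime ((p ^ (2 * m) + 1) / 2) ((p ^ (2 * n - 1) + 1) / 2) := by
  set X := (p ^ (2 * m) + 1) / 2
  set Y := (p ^ (2 * n - 1) + 1) / 2
  have hX : 2 * X = p ^ (2 * m) + 1 := Nat.two_mul_half_add_one hodd.pow
  have hY : 2 * Y = p ^ (2 * n - 1) + 1 := Nat.two_mul_half_add_one hodd.pow
  have hX_odd : Odd X := by
    simpa only [X, ← pow_mul, mul_comm m] using Nat.odd_half_sq_add_one (hodd.pow (n := m))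
  have hgcd_dvd_two : Nat.gcd X Y ∣ 2 :=
    Nat.dvd_two_of_dvd_pow_add_one (even_two_mul m) ⟨n - 1, by omega⟩
      (hX ▸ (Nat.gcd_dvd_left X Y).mul_left 2) (hY ▸ (Nat.gcd_dvd_right X Y).mul_left 2)
  exact Nat.eq_one_of_dvd_one <|
    hX_odd.coprime_two_right ▸ Nat.dvd_gcd (Nat.gcd_dvd_left X Y) hgcd_dvd_two

/-- For an odd prime `p` and positive integers `m, n`, the integers `(p^(2m)+1)/2` and
`(p^(2n-1)+1)/2` are relatively prime. -/
theorem coprime_half_prime_powers (p m n : ℕ) (hp : p.Prime) (hodd : Odd p)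
    (hm : 0 < m) (hn : 0 < n) :
    Nat.Coprime ((p ^ (2 * m) + 1) / 2) ((p ^ (2 * n - 1) + 1) / 2) :=
  coprime_half_prime_powers_general p m n hodd hn
end

section
/- For every integer h ≥ 1, the number of quadruples (a, b, c, d) of integers with 0 ≤ a, b, c, d ≤ h−1 satisfying a < c, b ≤ c and b < d equals h(h−1)(h+1)(5h−6)/24. -/
open scoped Topology TensorProduct

lemma aux_card_b (h : ℕ) (c d : Fin h) :
    Fintype.card {b : Fin h // b ≤ c ∧ b < d} = min ((c:ℕ)+1) (d:ℕ) := by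
  have e : ∀ b : Fin h, (b ≤ c ∧ b < d) ↔ ((b:ℕ) < min ((c:ℕ)+1) (d:ℕ)) := by
    intro b
    rw [Fin.le_def, Fin.lt_def, Nat.lt_min, Nat.lt_succ_iff]
  rw [Fintype.card_congr (Equiv.subtypeEquivRight e)]
  exact Fintype.card_fin_lt_of_le (by omega)

lemma aux_card_a (h : ℕ) (c : Fin h) :
    Fintype.card {a : Fin h // a < c} = (c : ℕ) := by
  have e : ∀ a : Fin h, (a < c) ↔ ((a:ℕ) < (c:ℕ)) := fun a => Iff.rfl
  rw [Fintype.card_congr (Equiv.subtypeEquivRight e)]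
  exact Fintype.card_fin_lt_of_le (le_of_lt c.2)

def aux_equiv (h : ℕ) :
    {q : Fin h × Fin h × Fin h × Fin h //
        q.1 < q.2.2.1 ∧ q.2.1 ≤ q.2.2.1 ∧ q.2.1 < q.2.2.2} ≃
    (cd : Fin h × Fin h) × ({a : Fin h // a < cd.1} × {b : Fin h // b ≤ cd.1 ∧ b < cd.2}) where
  toFun q := ⟨(q.1.2.2.1, q.1.2.2.2), ⟨⟨q.1.1, q.2.1⟩, ⟨q.1.2.1, q.2.2.1, q.2.2.2⟩⟩⟩
  invFun x := ⟨(x.2.1.1, x.2.2.1, x.1.1, x.1.2), x.2.1.2, x.2.2.2.1, x.2.2.2.2⟩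
  left_inv _ := rfl
  right_inv _ := rfl

lemma aux_card (h : ℕ) :
    Nat.card {q : Fin h × Fin h × Fin h × Fin h //
        q.1 < q.2.2.1 ∧ q.2.1 ≤ q.2.2.1 ∧ q.2.1 < q.2.2.2}
    = ∑ c ∈ Finset.range h, ∑ d ∈ Finset.range h, c * min (c+1) d := by
  rw [Nat.card_congr (aux_equiv h), Nat.card_eq_fintype_card, Fintype.card_sigma]
  simp_rw [Fintype.card_prod, aux_card_a, aux_card_b]
  rw [Fintype.sum_prod_type]
  rw [← Fin.sum_univ_eq_sum_range (fun c => ∑ d ∈ Finset.range h, c * min (c+1) d) h]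
  refine Finset.sum_congr rfl fun c _ => ?_
  rw [← Fin.sum_univ_eq_sum_range (fun d => (c:ℕ) * min ((c:ℕ)+1) d) h]

lemma aux_g1 (n : ℕ) : 2 * (∑ i ∈ Finset.range n, (i:ℤ)) = n * (n-1) := by
  induction n with
  | zero => simp
  | succ n ih => rw [Finset.sum_range_succ]; push_cast; push_cast at ih; linarith

lemma aux_g2 (n : ℕ) : 3 * (∑ i ∈ Finset.range n, (i:ℤ)*(i+1)) = (n-1)*n*(n+1) := by
  induction n with
  | zero => simp
  | succ n ih =>
    rw [Finset.sum_range_succ]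
    push_cast
    linear_combination ih

lemma aux_sum (h : ℕ) :
    24 * ((∑ c ∈ Finset.range h, ∑ d ∈ Finset.range h, c * min (c+1) d : ℕ) : ℤ)
      = (h : ℤ) * ((h : ℤ) - 1) * ((h : ℤ) + 1) * (5 * (h : ℤ) - 6) := by
  induction h with
  | zero => simp
  | succ h ih =>
    have step : (∑ c ∈ Finset.range (h+1), ∑ d ∈ Finset.range (h+1), c * min (c+1) d)
        = (∑ c ∈ Finset.range h, ∑ d ∈ Finset.range h, c * min (c+1) d)
          + (∑ c ∈ Finset.range h, c * (c+1))
          + h * (∑ d ∈ Finset.range (h+1), d) := by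
      rw [Finset.sum_range_succ]
      have h1 : ∑ d ∈ Finset.range (h+1), h * min (h+1) d
          = h * (∑ d ∈ Finset.range (h+1), d) := by
        rw [Finset.mul_sum]
        refine Finset.sum_congr rfl fun d hd => ?_
        have := Finset.mem_range.mp hd
        rw [min_eq_right (by omega : d ≤ h+1)]
      have h2 : ∀ c ∈ Finset.range h,
          (∑ d ∈ Finset.range (h+1), c * min (c+1) d)
            = (∑ d ∈ Finset.range h, c * min (c+1) d) + c * (c+1) := by
        intro c hc
        have := Finset.mem_range.mp hc
        rw [Finset.sum_range_succ, min_eq_left (by omega : c+1 ≤ h)]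
      rw [Finset.sum_congr rfl h2, Finset.sum_add_distrib, h1]
    rw [step]
    have g1 := aux_g1 (h+1)
    have g2 := aux_g2 h
    push_cast
    push_cast at ih g1 g2
    linear_combination ih + 8 * g2 + 12 * (h:ℤ) * g1

/-- For `h ≥ 1`, the number of quadruples `(a,b,c,d)` with `0 ≤ a,b,c,d ≤ h-1`, `a < c`,
`b ≤ c` and `b < d` equals `h(h-1)(h+1)(5h-6)/24`. -/
theorem count_mochizuki_quadruples (h : ℕ) (h1 : 1 ≤ h) :
    (24 : ℤ) * (Nat.card {q : Fin h × Fin h × Fin h × Fin h //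
        q.1 < q.2.2.1 ∧ q.2.1 ≤ q.2.2.1 ∧ q.2.1 < q.2.2.2} : ℤ)
      = (h : ℤ) * ((h : ℤ) - 1) * ((h : ℤ) + 1) * (5 * (h : ℤ) - 6) := by
  rw [aux_card h]
  exact aux_sum h
end
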